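/- arXiv:1209.1406 — 2 statements merged into one kernel-verified Lean document; each statement's English description precedes it below -/
import Mathlib

section
/- For each dimension l = 1,…,d let μ_l be a measure on ℝ with all polynomial moments finite, and let (Q^{(l)}_m)_{m≥1} be quadrature rules such that Q^{(l)}_m is exact of degree a_l(m) for μ_l, where each a_l : {1,2,…} → ℕ is nondecreasing. Let K ⊆ {1,2,…}^d be a finite admissible multi-index set and let A := Σ_{k∈K} Δ^{(1)}_{k_1} ⊗ ⋯ ⊗ Δ^{(d)}_{k_d} be the corresponding Smolyak quadrature. Then for every multi-index α ∈ ℕ^d for which there exists k ∈ K with α_l ≤ a_l(k_l) for all l, the Smolyak quadrature integrates the monomial exactly: A(x ↦ Π_l x_l^{α_l}) = ∫ Π_l x_l^{α_l} d(μ_1 ⊗ ⋯ ⊗ μ_d). -/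
/-! On a product monomial every tensor rule factors into one-dimensional rules `q l m`, so the
Smolyak summand of `k` is `∏ l, (q l (k l) - q l (k l - 1))`. Exactness and monotonicity of the
degrees make `q l m` the `l`-th moment for every `m ≥ k₀ l`, so a summand vanishes unless
`k ≤ k₀`; admissibility puts the whole box `[1, k₀]` into `K`, and over that box the sum
telescopes coordinatewise to the product of the moments, which is the integral by Fubini. -/

open MeasureTheory

/-- The tensor quadrature `Q_k = Q^{(1)}_{k 1} ⊗ ⋯ ⊗ Q^{(d)}_{k d}` acting on a function
`f : ℝ^d → ℝ` by summing over the product node grid with product weights.  `N l m` is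
the number of points of the level-`m` rule in dimension `l`, with nodes `x l m` and
weights `w l m`; the level-`0` rule `Q^{(l)}_0 := 0` is encoded by `N l 0 = 0`, which
makes any tensor rule with a zero level the zero functional. -/
noncomputable def tensorQuad {d : ℕ} (N : Fin d → ℕ → ℕ)
    (x w : ∀ (l : Fin d) (m : ℕ), Fin (N l m) → ℝ)
    (k : Fin d → ℕ) (f : (Fin d → ℝ) → ℝ) : ℝ :=
  ∑ i : ∀ l, Fin (N l (k l)),
    (∏ l, w l (k l) (i l)) * f (fun l => x l (k l) (i l))

/-- The Smolyak quadrature `A = ∑_{k ∈ K} Δ_{k 1} ⊗ ⋯ ⊗ Δ_{k d}`, where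
`Δ^{(l)}_m = Q^{(l)}_m − Q^{(l)}_{m−1}`: the tensor product of the differences is
expanded multilinearly, `Δ_{k 1} ⊗ ⋯ ⊗ Δ_{k d} = ∑_{S ⊆ {1,…,d}} (−1)^{|S|} Q_{k − 1_S}`. -/
noncomputable def smolyakQuad {d : ℕ} (N : Fin d → ℕ → ℕ)
    (x w : ∀ (l : Fin d) (m : ℕ), Fin (N l m) → ℝ)
    (K : Finset (Fin d → ℕ)) (f : (Fin d → ℝ) → ℝ) : ℝ :=
  ∑ k ∈ K, ∑ S ∈ (Finset.univ : Finset (Fin d)).powerset,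
    (-1 : ℝ) ^ S.card * tensorQuad N x w (fun l => k l - if l ∈ S then 1 else 0) f

open Finset

theorem sum_Icc_one_sub_pred {G : Type*} [AddCommGroup G] (f : ℕ → G) (n : ℕ) :
    ∑ m ∈ Icc 1 n, (f m - f (m - 1)) = f n - f 0 := by
  induction n with
  | zero => simp
  | succ n ih => rw [sum_Icc_succ_top (by omega), ih, Nat.add_sub_cancel]; abel

theorem sum_powerset_neg_one_pow_mul_prod_sub_ite {ι R : Type*} [Fintype ι] [DecidableEq ι]
    [CommRing R] (f : ι → ℕ → R) (k : ι → ℕ) :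
    ∑ S ∈ (univ : Finset ι).powerset,
        (-1 : R) ^ S.card * ∏ l, f l (k l - if l ∈ S then 1 else 0)
      = ∏ l, (f l (k l) - f l (k l - 1)) := by
  simp_rw [sub_eq_neg_add (f _ _), prod_add, prod_neg]
  refine sum_congr rfl fun S _ => ?_
  rw [mul_assoc, ← prod_mul_prod_compl S, compl_eq_univ_sdiff]
  congr 2
  · exact prod_congr rfl fun l hl => by simp [hl]
  · exact prod_congr rfl fun l hl => by simp [(mem_sdiff.1 hl).2]

section Admissible

variable {ι : Type*} [Fintype ι] [DecidableEq ι] {K : Finset (ι → ℕ)}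

theorem mem_of_le_of_mem_of_admissible
    (hadm : ∀ k ∈ K, ∀ i, 2 ≤ k i → Function.update k i (k i - 1) ∈ K)
    {j k : ι → ℕ} (hk : k ∈ K) (hj : ∀ l, 1 ≤ j l) (hjk : j ≤ k) : j ∈ K := by
  induction k using WellFoundedLT.induction with
  | _ k ih =>
    obtain rfl | hlt := hjk.eq_or_lt
    · exact hk
    · obtain ⟨-, l, hl⟩ := Pi.lt_def.1 hlt
      have hk' : Function.update k l (k l - 1) ∈ K := hadm k hk l (by have := hj l; omega)
      refine ih _ (update_lt_self_iff.2 (by omega)) hk' ?_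
      exact le_update_iff.2 ⟨by omega, fun i _ => hjk i⟩

theorem sum_prod_sub_pred_eq_prod_of_admissible {R : Type*} [CommRing R]
    (hadm : ∀ k ∈ K, ∀ i, 2 ≤ k i → Function.update k i (k i - 1) ∈ K) {k₀ : ι → ℕ}
    (hk₀ : k₀ ∈ K) (q : ι → ℕ → R) (hq0 : ∀ l, q l 0 = 0)
    (hq : ∀ l m, k₀ l ≤ m → q l m = q l (k₀ l)) :
    ∑ k ∈ K, ∏ l, (q l (k l) - q l (k l - 1)) = ∏ l, q l (k₀ l) := by
  set B := Fintype.piFinset fun l => Icc 1 (k₀ l)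
  have hBK : B ⊆ K := fun j hj => by
    simp only [B, Fintype.mem_piFinset, mem_Icc] at hj
    exact mem_of_le_of_mem_of_admissible hadm hk₀ (fun l => (hj l).1) fun l => (hj l).2
  have hvanish : ∀ k ∉ B, ∏ l, (q l (k l) - q l (k l - 1)) = 0 := by
    intro k hk
    simp only [B, Fintype.mem_piFinset, mem_Icc, not_forall, not_and_or, not_le] at hk
    obtain ⟨l, hl | hl⟩ := hk <;> apply prod_eq_zero (mem_univ l)
    -- `k l = 0`: the factor is `q l 0 - q l (0 - 1) = 0` by truncated subtraction
    · rw [Nat.lt_one_iff.1 hl, sub_self]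
    · rw [hq l _ hl.le, hq l (k l - 1) (by omega), sub_self]
  calc ∑ k ∈ K, ∏ l, (q l (k l) - q l (k l - 1))
      = ∑ k ∈ B, ∏ l, (q l (k l) - q l (k l - 1)) :=
        (sum_subset hBK fun k _ hk => hvanish k hk).symm
    _ = ∏ l, ∑ m ∈ Icc 1 (k₀ l), (q l m - q l (m - 1)) := by rw [prod_univ_sum]
    _ = ∏ l, q l (k₀ l) := by simp only [sum_Icc_one_sub_pred, hq0, sub_zero]

end Admissible

section Quadrature

variable {d : ℕ} (N : Fin d → ℕ → ℕ) (x w : ∀ (l : Fin d) (m : ℕ), Fin (N l m) → ℝ)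

noncomputable def quadRule (l : Fin d) (m : ℕ) (g : ℝ → ℝ) : ℝ :=
  ∑ i, w l m i * g (x l m i)

theorem tensorQuad_prod (k : Fin d → ℕ) (g : Fin d → ℝ → ℝ) :
    tensorQuad N x w k (fun y => ∏ l, g l (y l)) = ∏ l, quadRule N x w l (k l) (g l) := by
  simp only [tensorQuad, quadRule, prod_univ_sum, Fintype.piFinset_univ, prod_mul_distrib]

theorem smolyakQuad_prod (K : Finset (Fin d → ℕ)) (g : Fin d → ℝ → ℝ) :
    smolyakQuad N x w K (fun y => ∏ l, g l (y l))
      = ∑ k ∈ K, ∏ l, (quadRule N x w l (k l) (g l) - quadRule N x w l (k l - 1) (g l)) := by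
  refine sum_congr rfl fun k _ => ?_
  simp only [tensorQuad_prod]
  exact sum_powerset_neg_one_pow_mul_prod_sub_ite (fun l m => quadRule N x w l m (g l)) k

end Quadrature

theorem smolyak_quadrature_exactness_general (d : ℕ)
    (μ : Fin d → Measure ℝ) [∀ l, SigmaFinite (μ l)]
    (N : Fin d → ℕ → ℕ) (hN0 : ∀ l, N l 0 = 0)
    (x w : ∀ (l : Fin d) (m : ℕ), Fin (N l m) → ℝ)
    (a : Fin d → ℕ → ℕ)
    (hmono : ∀ l, ∀ m m' : ℕ, 1 ≤ m → m ≤ m' → a l m ≤ a l m')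
    (hexact : ∀ (l : Fin d) (m : ℕ), 1 ≤ m → ∀ p : Polynomial ℝ,
      p.natDegree ≤ a l m →
      ∑ i, w l m i * p.eval (x l m i) = ∫ t, p.eval t ∂(μ l))
    (K : Finset (Fin d → ℕ))
    (hpos : ∀ k ∈ K, ∀ i, 1 ≤ k i)
    (hadm : ∀ k ∈ K, ∀ i, 2 ≤ k i → Function.update k i (k i - 1) ∈ K)
    (α : Fin d → ℕ) (hα : ∃ k ∈ K, ∀ l, α l ≤ a l (k l)) :
    smolyakQuad N x w K (fun y => ∏ l, y l ^ α l)
      = ∫ y, ∏ l, y l ^ α l ∂(Measure.pi μ) := by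
  obtain ⟨k₀, hk₀K, hk₀⟩ := hα
  set q : Fin d → ℕ → ℝ := fun l m => quadRule N x w l m (· ^ α l)
  have hq0 (l : Fin d) : q l 0 = 0 := by
    have : IsEmpty (Fin (N l 0)) := by rw [hN0 l]; infer_instance
    simp [q, quadRule]
  have hq_exact (l : Fin d) (m : ℕ) (hm : k₀ l ≤ m) : q l m = ∫ t, t ^ α l ∂(μ l) := by
    have hdeg : α l ≤ a l m := (hk₀ l).trans (hmono l _ _ (hpos k₀ hk₀K l) hm)
    simpa [q, quadRule] using
      hexact l m ((hpos k₀ hk₀K l).trans hm) (Polynomial.X ^ α l) (by simpa using hdeg)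
  rw [smolyakQuad_prod N x w K (fun l t => t ^ α l),
    sum_prod_sub_pred_eq_prod_of_admissible hadm hk₀K q hq0
      fun l m hm => (hq_exact l m hm).trans (hq_exact l _ le_rfl).symm,
    integral_fintype_prod_eq_prod (fun l (t : ℝ) => t ^ α l)]
  exact prod_congr rfl fun l _ => hq_exact l _ le_rfl

/-- (Exactness of Smolyak quadrature, Corollary 3.2 of the paper.)
For each dimension `l` let `μ l` be a measure on `ℝ` with all polynomial moments finite
and `Q^{(l)}_m` quadrature rules exact of degree `a l m` for `μ l`, with `a l`
nondecreasing (on levels `≥ 1`).  Let `K ⊆ {1,2,…}^d` be a finite admissible multi-index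
set and `A` the corresponding Smolyak quadrature.  Then for every multi-index `α` such
that some `k ∈ K` satisfies `α l ≤ a l (k l)` for all `l`, the Smolyak quadrature
integrates the monomial `x ↦ ∏ l, (x l)^(α l)` exactly against the product measure. -/
theorem smolyak_quadrature_exactness (d : ℕ)
    (μ : Fin d → Measure ℝ) [∀ l, SigmaFinite (μ l)]
    (hmom : ∀ l (m : ℕ), Integrable (fun t => t ^ m) (μ l))
    (N : Fin d → ℕ → ℕ) (hN0 : ∀ l, N l 0 = 0)
    (x w : ∀ (l : Fin d) (m : ℕ), Fin (N l m) → ℝ)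
    (a : Fin d → ℕ → ℕ)
    (hmono : ∀ l, ∀ m m' : ℕ, 1 ≤ m → m ≤ m' → a l m ≤ a l m')
    (hexact : ∀ (l : Fin d) (m : ℕ), 1 ≤ m → ∀ p : Polynomial ℝ,
      p.natDegree ≤ a l m →
      ∑ i, w l m i * p.eval (x l m i) = ∫ t, p.eval t ∂(μ l))
    (K : Finset (Fin d → ℕ))
    (hpos : ∀ k ∈ K, ∀ i, 1 ≤ k i)
    (hadm : ∀ k ∈ K, ∀ i, 2 ≤ k i → Function.update k i (k i - 1) ∈ K)
    (α : Fin d → ℕ) (hα : ∃ k ∈ K, ∀ l, α l ≤ a l (k l)) :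
    smolyakQuad N x w K (fun y => ∏ l, y l ^ α l)
      = ∫ y, ∏ l, y l ^ α l ∂(Measure.pi μ) :=
  smolyak_quadrature_exactness_general d μ N hN0 x w a hmono hexact K hpos hadm α hα
end

section
/- In the Smolyak pseudospectral setting, let K ⊆ {1,2,…}^d be a finite admissible multi-index set with Smolyak coefficients c_k = Σ_{z∈{0,1}^d, k+z∈K} (−1)^{‖z‖₁}, let j be a multi-index included in the expansion, and define the computed coefficient functional F_j(f) := Σ_{k∈K, j_l ≤ q_l(k_l) ∀l} c_k Q_k(f Ψ_j). Let j′ ≠ j be a multi-index and suppose there exists k ∈ K such that Ψ_j is included in the range of S_k (j_l ≤ q_l(k_l) for all l) and the tensor quadrature Q_k integrates Ψ_{j′} Ψ_j exactly (it suffices that j_l + j′_l ≤ a_l(k_l) for all l). Then there is no external aliasing of Ψ_{j′} onto Ψ_j: F_j(Ψ_{j′}) = 0. -/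
open MeasureTheory

/-- The multivariate basis polynomial `Ψ_j(x) = ∏ l, ψ^{(l)}_{j l}(x l)`. -/
noncomputable def multiPsi {d : ℕ} (ψ : Fin d → ℕ → Polynomial ℝ) (j : Fin d → ℕ) :
    (Fin d → ℝ) → ℝ :=
  fun y => ∏ l, (ψ l (j l)).eval (y l)

/-- The integer Smolyak coefficient `c_k = ∑_{z ∈ {0,1}^d, k+z ∈ K} (−1)^{‖z‖₁}`,
with binary multi-indices `z` encoded as subsets `S ⊆ {1,…,d}`. -/
noncomputable def smolyakCoeff {d : ℕ} (K : Finset (Fin d → ℕ)) (k : Fin d → ℕ) : ℤ :=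
  ∑ S ∈ (Finset.univ : Finset (Fin d)).powerset,
    if (fun i => k i + if i ∈ S then 1 else 0) ∈ K then (-1 : ℤ) ^ S.card else 0

/-- The computed coefficient functional of the Smolyak pseudospectral approximation:
`F_j(f) = ∑_{k ∈ K, j l ≤ q l (k l) ∀ l} c_k Q_k(f Ψ_j)`, where `q l m = ⌊a l m / 2⌋`
(the coefficient of `Ψ_j` in `A(K,d,S)(f) = ∑_{k ∈ K} c_k S_k(f)`). -/
noncomputable def smolyakCoeffFunctional {d : ℕ} (N : Fin d → ℕ → ℕ)
    (x w : ∀ (l : Fin d) (m : ℕ), Fin (N l m) → ℝ)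
    (ψ : Fin d → ℕ → Polynomial ℝ) (a : Fin d → ℕ → ℕ)
    (K : Finset (Fin d → ℕ)) (j : Fin d → ℕ) (f : (Fin d → ℝ) → ℝ) : ℝ :=
  ∑ k ∈ K.filter (fun k => ∀ l, j l ≤ a l (k l) / 2),
    (smolyakCoeff K k : ℝ) * tensorQuad N x w k (fun z => f z * multiPsi ψ j z)

section Aux


/-- Product structure of the tensor quadrature applied to a product function. -/
lemma tensorQuad_prod' {d : ℕ} (N : Fin d → ℕ → ℕ)
    (x w : ∀ (l : Fin d) (m : ℕ), Fin (N l m) → ℝ)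
    (k : Fin d → ℕ) (F : Fin d → ℝ → ℝ) :
    (∑ i : ∀ l, Fin (N l (k l)),
      (∏ l, w l (k l) (i l)) * ∏ l, F l (x l (k l) (i l)))
      = ∏ l, ∑ i, w l (k l) i * F l (x l (k l) i) := by
  classical
  rw [Finset.prod_univ_sum (fun l => (Finset.univ : Finset (Fin (N l (k l)))))
    (fun l i => w l (k l) i * F l (x l (k l) i)), Fintype.piFinset_univ]
  exact Finset.sum_congr rfl fun p _ => by rw [Finset.prod_mul_distrib]

/-- Downward closure of an admissible set along a subset of coordinates. -/
lemma mem_of_sub {d : ℕ} (K : Finset (Fin d → ℕ))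
    (hadm : ∀ k ∈ K, ∀ i, 2 ≤ k i → Function.update k i (k i - 1) ∈ K) :
    ∀ (S : Finset (Fin d)) (k : Fin d → ℕ), k ∈ K → (∀ l ∈ S, 2 ≤ k l) →
      (fun l => k l - if l ∈ S then 1 else 0) ∈ K := by
  classical
  intro S
  induction S using Finset.induction with
  | empty => intro k hk _; simpa using hk
  | @insert a S ha ih =>
    intro k hk hS
    have h1 : (fun l => k l - if l ∈ S then 1 else 0) ∈ K :=
      ih k hk fun l hl => hS l (Finset.mem_insert_of_mem hl)
    have h2 : 2 ≤ (fun l => k l - if l ∈ S then 1 else 0) a := by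
      simp only [ha, if_neg ha]
      exact hS a (Finset.mem_insert_self a S)
    have h3 := hadm _ h1 a h2
    convert h3 using 1
    funext l
    by_cases hla : l = a
    · subst hla
      simp [Function.update_self, ha, Finset.mem_insert]
    · simp [Function.update_of_ne hla, Finset.mem_insert, hla]

/-- Any multi-index between `1` and an element of an admissible set lies in the set. -/
lemma mem_box {d : ℕ} (K : Finset (Fin d → ℕ))
    (hadm : ∀ k ∈ K, ∀ i, 2 ≤ k i → Function.update k i (k i - 1) ∈ K) :
    ∀ (n : ℕ) (k₀ k : Fin d → ℕ), k₀ ∈ K → (∀ l, 1 ≤ k l) → (∀ l, k l ≤ k₀ l) →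
      (∑ l, (k₀ l - k l)) = n → k ∈ K := by
  classical
  intro n
  induction n with
  | zero =>
    intro k₀ k hk₀ _ hle hsum
    have hz : ∀ l ∈ Finset.univ, k₀ l - k l = 0 := Finset.sum_eq_zero_iff.mp hsum
    have : k = k₀ := by
      funext l
      have h1 := hz l (Finset.mem_univ l)
      have h2 := hle l
      omega
    rwa [this]
  | succ n ih =>
    intro k₀ k hk₀ h1 hle hsum
    have hex : ∃ l, k l < k₀ l := by
      by_contra h
      push_neg at h
      have hz : ∀ l ∈ Finset.univ, k₀ l - k l = 0 := fun l _ => by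
        have ha := h l; have hb := hle l; omega
      rw [Finset.sum_congr rfl hz] at hsum
      simp at hsum
    obtain ⟨l, hl⟩ := hex
    have e1 : (k₀ l - k l) + ∑ l' ∈ Finset.univ.erase l, (k₀ l' - k l') = n + 1 := by
      rw [Finset.add_sum_erase _ (fun l' => k₀ l' - k l') (Finset.mem_univ l)]
      exact hsum
    have e3 : ∑ l' ∈ Finset.univ.erase l, (k₀ l' - Function.update k l (k l + 1) l')
        = ∑ l' ∈ Finset.univ.erase l, (k₀ l' - k l') :=
      Finset.sum_congr rfl fun l' hl' => by
        rw [Function.update_of_ne (Finset.ne_of_mem_erase hl')]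
    have hsum' : (∑ l', (k₀ l' - Function.update k l (k l + 1) l')) = n := by
      have h4 := Finset.add_sum_erase _
        (fun l' => k₀ l' - Function.update k l (k l + 1) l') (Finset.mem_univ l)
      simp only [Function.update_self] at h4
      rw [e3] at h4
      omega
    have hk'K : Function.update k l (k l + 1) ∈ K := by
      refine ih k₀ _ hk₀ (fun l' => ?_) (fun l' => ?_) hsum'
      · by_cases h' : l' = l
        · subst h'; rw [Function.update_self]; omega
        · rw [Function.update_of_ne h']; exact h1 l'
      · by_cases h' : l' = l
        · subst h'; rw [Function.update_self]; omega
        · rw [Function.update_of_ne h']; exact hle l'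
    have h2 : 2 ≤ Function.update k l (k l + 1) l := by
      have := h1 l; rw [Function.update_self]; omega
    have hfin := hadm _ hk'K l h2
    have heq : Function.update (Function.update k l (k l + 1)) l
        (Function.update k l (k l + 1) l - 1) = k := by
      funext l'
      by_cases h' : l' = l
      · subst h'; simp
      · simp [Function.update_of_ne h']
    rwa [heq] at hfin

/-- Telescoping sum. -/
lemma telescope (f : ℕ → ℝ) (hf0 : f 0 = 0) (n : ℕ) :
    ∑ m ∈ Finset.Icc 1 n, (f m - f (m - 1)) = f n := by
  induction n with
  | zero => simp [hf0]
  | succ n ih =>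
    rw [Finset.sum_Icc_succ_top (by omega), ih]
    simp

/-- Summation by parts: for admissible `K` and `g` vanishing whenever a component
is zero, `∑ c_k g(k) = ∑_k Δg(k)` where `Δ` is the tensor backward difference. -/
lemma sum_by_parts {d : ℕ} (K : Finset (Fin d → ℕ))
    (hpos : ∀ k ∈ K, ∀ i, 1 ≤ k i)
    (hadm : ∀ k ∈ K, ∀ i, 2 ≤ k i → Function.update k i (k i - 1) ∈ K)
    (g : (Fin d → ℕ) → ℝ) (hg0 : ∀ k : Fin d → ℕ, (∃ l, k l = 0) → g k = 0) :
    ∑ k ∈ K, (smolyakCoeff K k : ℝ) * g k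
      = ∑ k ∈ K, ∑ S ∈ (Finset.univ : Finset (Fin d)).powerset,
          (-1 : ℝ) ^ S.card * g (fun l => k l - if l ∈ S then 1 else 0) := by
  classical
  have hL : ∑ k ∈ K, (smolyakCoeff K k : ℝ) * g k
      = ∑ p ∈ (K ×ˢ (Finset.univ : Finset (Fin d)).powerset).filter
          (fun p => (fun l => p.1 l + if l ∈ p.2 then 1 else 0) ∈ K),
          (-1 : ℝ) ^ p.2.card * g p.1 := by
    rw [Finset.sum_filter, Finset.sum_product]
    refine Finset.sum_congr rfl fun k hk => ?_
    have hc : ((smolyakCoeff K k : ℤ) : ℝ)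
        = ∑ S ∈ (Finset.univ : Finset (Fin d)).powerset,
            if (fun l => k l + if l ∈ S then 1 else 0) ∈ K then (-1 : ℝ) ^ S.card else 0 := by
      rw [smolyakCoeff]
      push_cast
      rfl
    rw [hc, Finset.sum_mul]
    refine Finset.sum_congr rfl fun S hS => ?_
    by_cases h : (fun l => k l + if l ∈ S then 1 else 0) ∈ K
    · simp [h]
    · simp [h]
  have hR : ∑ k ∈ K, ∑ S ∈ (Finset.univ : Finset (Fin d)).powerset,
          (-1 : ℝ) ^ S.card * g (fun l => k l - if l ∈ S then 1 else 0)
      = ∑ p ∈ (K ×ˢ (Finset.univ : Finset (Fin d)).powerset).filter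
          (fun p => ∀ l ∈ p.2, 2 ≤ p.1 l),
          (-1 : ℝ) ^ p.2.card * g (fun l => p.1 l - if l ∈ p.2 then 1 else 0) := by
    rw [Finset.sum_filter, Finset.sum_product]
    refine Finset.sum_congr rfl fun k hk => Finset.sum_congr rfl fun S hS => ?_
    by_cases h : ∀ l ∈ S, 2 ≤ k l
    · rw [if_pos h]
    · rw [if_neg h]
      push_neg at h
      obtain ⟨l, hlS, hl⟩ := h
      have hk1 := hpos k hk l
      have : g (fun l' => k l' - if l' ∈ S then 1 else 0) = 0 := by
        refine hg0 _ ⟨l, ?_⟩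
        simp [hlS]
        omega
      rw [this, mul_zero]
  rw [hL, hR]
  refine Finset.sum_nbij'
    (fun p => ((fun l => p.1 l + if l ∈ p.2 then 1 else 0), p.2))
    (fun p => ((fun l => p.1 l - if l ∈ p.2 then 1 else 0), p.2))
    ?_ ?_ ?_ ?_ ?_
  · rintro ⟨k, S⟩ hp
    simp only [Finset.mem_filter, Finset.mem_product] at hp ⊢
    obtain ⟨⟨hkK, hSp⟩, hmem⟩ := hp
    refine ⟨⟨hmem, hSp⟩, fun l hl => ?_⟩
    have := hpos k hkK l
    simp [hl]
    omega
  · rintro ⟨k, S⟩ hp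
    simp only [Finset.mem_filter, Finset.mem_product] at hp ⊢
    obtain ⟨⟨hkK, hSp⟩, h2⟩ := hp
    refine ⟨⟨mem_of_sub K hadm S k hkK h2, hSp⟩, ?_⟩
    have : (fun l => (k l - if l ∈ S then 1 else 0) + if l ∈ S then 1 else 0) = k := by
      funext l
      by_cases hl : l ∈ S
      · have := h2 l hl; simp [hl]; omega
      · simp [hl]
    rwa [this]
  · rintro ⟨k, S⟩ hp
    simp only [Finset.mem_filter, Finset.mem_product] at hp
    obtain ⟨⟨hkK, hSp⟩, hmem⟩ := hp
    have : (fun l => (k l + if l ∈ S then 1 else 0) - if l ∈ S then 1 else 0) = k := by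
      funext l; by_cases hl : l ∈ S <;> simp [hl]
    simp only [Prod.mk.injEq]
    exact ⟨this, trivial⟩
  · rintro ⟨k, S⟩ hp
    simp only [Finset.mem_filter, Finset.mem_product] at hp
    obtain ⟨⟨hkK, hSp⟩, h2⟩ := hp
    have : (fun l => (k l - if l ∈ S then 1 else 0) + if l ∈ S then 1 else 0) = k := by
      funext l
      by_cases hl : l ∈ S
      · have := h2 l hl; simp [hl]; omega
      · simp [hl]
    simp only [Prod.mk.injEq]
    exact ⟨this, trivial⟩
  · rintro ⟨k, S⟩ hp
    simp only [Finset.mem_filter, Finset.mem_product] at hp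
    obtain ⟨⟨hkK, hSp⟩, hmem⟩ := hp
    have : (fun l => (k l + if l ∈ S then 1 else 0) - if l ∈ S then 1 else 0) = k := by
      funext l; by_cases hl : l ∈ S <;> simp [hl]
    rw [this]


end Aux

/-- (Theorem 3.3, condition (b): no external aliasing.)
In the Smolyak pseudospectral setting (orthonormal families `ψ l` for measures `μ l`
with all moments finite; quadrature rules `Q^{(l)}_m` exact of degree `a l m`, `a l`
nondecreasing; `K` finite admissible), let `j` be a multi-index included in the
expansion, and let `j' ≠ j` be such that for some `k₀ ∈ K` the term `Ψ_j` is included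
in the range of `S_{k₀}` (`j l ≤ q l (k₀ l)` for all `l`) and the tensor quadrature
`Q_{k₀}` integrates `Ψ_{j'} Ψ_j` exactly (it suffices that `j l + j' l ≤ a l (k₀ l)`
for all `l`).  Then there is no external aliasing of `Ψ_{j'}` onto `Ψ_j`:
`F_j(Ψ_{j'}) = 0`. -/
theorem smolyak_no_external_aliasing_condition_b (d : ℕ)
    (μ : Fin d → Measure ℝ)
    (hmom : ∀ l (n : ℕ), Integrable (fun t => t ^ n) (μ l))
    (ψ : Fin d → ℕ → Polynomial ℝ)
    (hdeg : ∀ l m, (ψ l m).natDegree = m)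
    (horth : ∀ l m m',
      ∫ t, (ψ l m).eval t * (ψ l m').eval t ∂(μ l) = if m = m' then 1 else 0)
    (N : Fin d → ℕ → ℕ) (x w : ∀ (l : Fin d) (m : ℕ), Fin (N l m) → ℝ)
    (a : Fin d → ℕ → ℕ)
    (hmono : ∀ l, ∀ m m' : ℕ, 1 ≤ m → m ≤ m' → a l m ≤ a l m')
    (hexact : ∀ (l : Fin d) (m : ℕ), 1 ≤ m → ∀ p : Polynomial ℝ,
      p.natDegree ≤ a l m →
      ∑ i, w l m i * p.eval (x l m i) = ∫ t, p.eval t ∂(μ l))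
    (K : Finset (Fin d → ℕ))
    (hpos : ∀ k ∈ K, ∀ i, 1 ≤ k i)
    (hadm : ∀ k ∈ K, ∀ i, 2 ≤ k i → Function.update k i (k i - 1) ∈ K)
    (j j' : Fin d → ℕ)
    (hne : j' ≠ j)
    (hb : ∃ k₀ ∈ K, (∀ l, j l ≤ a l (k₀ l) / 2) ∧ (∀ l, j l + j' l ≤ a l (k₀ l))) :
    smolyakCoeffFunctional N x w ψ a K j (multiPsi ψ j') = 0 := by
  classical
  obtain ⟨k₀, hk₀K, hq0, hex0⟩ := hb
  -- 1-D quadrature applied to the product `ψ_{j' l} ψ_{j l}`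
  set t : Fin d → ℕ → ℝ := fun l m =>
    ∑ i, w l m i * ((ψ l (j' l)).eval (x l m i) * (ψ l (j l)).eval (x l m i)) with htdef
  -- the 1-D coefficient function appearing in the Smolyak sum
  set G : Fin d → ℕ → ℝ := fun l m => if 1 ≤ m ∧ j l ≤ a l m / 2 then t l m else 0 with hGdef
  have hG0 : ∀ l, G l 0 = 0 := by
    intro l; simp only [hGdef]; rw [if_neg]; rintro ⟨h1, -⟩; omega
  -- exactness + orthonormality: `G l m` is `δ_{j l, j' l}` whenever the quadrature
  -- at level `m ≥ 1` is exact for `ψ_{j' l} ψ_{j l}`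
  have hC : ∀ (l : Fin d) (m : ℕ), 1 ≤ m → j l + j' l ≤ a l m →
      G l m = if j l = j' l then (1 : ℝ) else 0 := by
    intro l m h1 h2
    have hdegp : ((ψ l (j' l)) * (ψ l (j l))).natDegree ≤ a l m := by
      refine le_trans Polynomial.natDegree_mul_le ?_
      rw [hdeg, hdeg]; omega
    have hq := hexact l m h1 _ hdegp
    simp only [Polynomial.eval_mul] at hq
    have ht : t l m = if j l = j' l then (1 : ℝ) else 0 := by
      simp only [htdef]
      rw [hq, horth l (j' l) (j l)]
      by_cases h : j l = j' l
      · rw [if_pos h.symm, if_pos h]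
      · rw [if_neg (fun hh => h hh.symm), if_neg h]
    by_cases h : j l = j' l
    · have hj : j l ≤ a l m / 2 := by
        have hh : j' l = j l := h.symm
        omega
      simp only [hGdef]
      rw [if_pos ⟨h1, hj⟩, ht]
    · simp only [hGdef]
      rw [ht, if_neg h]
      split <;> rfl
  -- Step 1: the coefficient functional as a weighted sum of products of 1-D quadratures
  have step1 : smolyakCoeffFunctional N x w ψ a K j (multiPsi ψ j')
      = ∑ k ∈ K.filter (fun k => ∀ l, j l ≤ a l (k l) / 2),
          (smolyakCoeff K k : ℝ) * ∏ l, t l (k l) := by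
    simp only [smolyakCoeffFunctional]
    refine Finset.sum_congr rfl fun k hk => ?_
    congr 1
    have hfe : (fun z => multiPsi ψ j' z * multiPsi ψ j z)
        = fun y => ∏ l, ((ψ l (j' l)).eval (y l) * (ψ l (j l)).eval (y l)) := by
      funext y
      simp only [multiPsi]
      rw [← Finset.prod_mul_distrib]
    rw [hfe]
    simp only [tensorQuad]
    exact tensorQuad_prod' N x w k (fun l u => (ψ l (j' l)).eval u * (ψ l (j l)).eval u)
  -- Step 2: absorb the truncation indicator into the 1-D factors
  have step2 : ∑ k ∈ K.filter (fun k => ∀ l, j l ≤ a l (k l) / 2),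
        (smolyakCoeff K k : ℝ) * ∏ l, t l (k l)
      = ∑ k ∈ K, (smolyakCoeff K k : ℝ) * ∏ l, G l (k l) := by
    rw [Finset.sum_filter]
    refine Finset.sum_congr rfl fun k hk => ?_
    by_cases hP : ∀ l, j l ≤ a l (k l) / 2
    · rw [if_pos hP]
      congr 1
      refine Finset.prod_congr rfl fun l _ => ?_
      simp only [hGdef]
      rw [if_pos ⟨hpos k hk l, hP l⟩]
    · rw [if_neg hP]
      push_neg at hP
      obtain ⟨l, hl⟩ := hP
      have hz : G l (k l) = 0 := by
        simp only [hGdef]; rw [if_neg]; rintro ⟨-, hh⟩; omega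
      rw [Finset.prod_eq_zero (Finset.mem_univ l) hz, mul_zero]
  -- Step 3: summation by parts (Smolyak coefficients → backward differences)
  have step3 : ∑ k ∈ K, (smolyakCoeff K k : ℝ) * ∏ l, G l (k l)
      = ∑ k ∈ K, ∑ S ∈ (Finset.univ : Finset (Fin d)).powerset,
          (-1 : ℝ) ^ S.card * ∏ l, G l (k l - if l ∈ S then 1 else 0) := by
    exact sum_by_parts K hpos hadm (fun k => ∏ l, G l (k l))
      (fun k ⟨l, hl⟩ => Finset.prod_eq_zero (Finset.mem_univ l) (by rw [hl]; exact hG0 l))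
  -- Step 4: recognize the inner sum as a product of differences
  have step4 : ∀ k : Fin d → ℕ,
      ∑ S ∈ (Finset.univ : Finset (Fin d)).powerset,
          (-1 : ℝ) ^ S.card * ∏ l, G l (k l - if l ∈ S then 1 else 0)
        = ∏ l, (G l (k l) - G l (k l - 1)) := by
    intro k
    have h1 : ∏ l, (G l (k l) - G l (k l - 1))
        = ∏ l, ((-G l (k l - 1)) + G l (k l)) := by
      refine Finset.prod_congr rfl fun l _ => by ring
    rw [h1, Finset.prod_add]
    refine Finset.sum_congr rfl fun S hS => ?_
    have h2 : ∏ l ∈ S, (-G l (k l - 1)) = (-1 : ℝ) ^ S.card * ∏ l ∈ S, G l (k l - 1) := by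
      have : ∀ l ∈ S, -G l (k l - 1) = (-1 : ℝ) * G l (k l - 1) := fun l _ => by ring
      rw [Finset.prod_congr rfl this, Finset.prod_mul_distrib, Finset.prod_const]
    have h3 : ∏ l, G l (k l - if l ∈ S then 1 else 0)
        = (∏ l ∈ Finset.univ \ S, G l (k l - if l ∈ S then 1 else 0))
          * ∏ l ∈ S, G l (k l - if l ∈ S then 1 else 0) :=
      (Finset.prod_sdiff (Finset.subset_univ S)).symm
    have h4 : ∏ l ∈ Finset.univ \ S, G l (k l - if l ∈ S then 1 else 0)
        = ∏ l ∈ Finset.univ \ S, G l (k l) := by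
      refine Finset.prod_congr rfl fun l hl => ?_
      rw [if_neg (Finset.mem_sdiff.mp hl).2]
      simp
    have h5 : ∏ l ∈ S, G l (k l - if l ∈ S then 1 else 0) = ∏ l ∈ S, G l (k l - 1) := by
      refine Finset.prod_congr rfl fun l hl => by rw [if_pos hl]
    rw [h3, h4, h5, h2]
    ring
  -- Step 5: split off the box below `k₀` and evaluate
  rw [step1, step2, step3, Finset.sum_congr rfl fun k _ => step4 k,
    ← Finset.sum_filter_add_sum_filter_not K (fun k => ∀ l, k l ≤ k₀ l)]
  have hzero2 : ∑ k ∈ K.filter (fun k => ¬ ∀ l, k l ≤ k₀ l),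
      ∏ l, (G l (k l) - G l (k l - 1)) = 0 := by
    refine Finset.sum_eq_zero fun k hk => ?_
    rw [Finset.mem_filter] at hk
    obtain ⟨hkK, hnk⟩ := hk
    push_neg at hnk
    obtain ⟨l, hl⟩ := hnk
    have h1 : 1 ≤ k₀ l := hpos k₀ hk₀K l
    have c1 : G l (k l) = if j l = j' l then (1 : ℝ) else 0 :=
      hC l (k l) (by omega)
        (le_trans (hex0 l) (hmono l (k₀ l) (k l) h1 (by omega)))
    have c2 : G l (k l - 1) = if j l = j' l then (1 : ℝ) else 0 :=
      hC l (k l - 1) (by omega)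
        (le_trans (hex0 l) (hmono l (k₀ l) (k l - 1) h1 (by omega)))
    exact Finset.prod_eq_zero (Finset.mem_univ l) (by rw [c1, c2, sub_self])
  have hbox : K.filter (fun k => ∀ l, k l ≤ k₀ l)
      = Fintype.piFinset (fun l => Finset.Icc 1 (k₀ l)) := by
    ext k
    simp only [Finset.mem_filter, Fintype.mem_piFinset, Finset.mem_Icc]
    constructor
    · rintro ⟨hkK, hle⟩ l
      exact ⟨hpos k hkK l, hle l⟩
    · intro h
      exact ⟨mem_box K hadm (∑ l, (k₀ l - k l)) k₀ k hk₀K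
        (fun l => (h l).1) (fun l => (h l).2) rfl, fun l => (h l).2⟩
  rw [hzero2, add_zero, hbox,
    ← Finset.prod_univ_sum (fun l => Finset.Icc 1 (k₀ l)) (fun l m => G l m - G l (m - 1))]
  have htel : ∀ l : Fin d, ∑ m ∈ Finset.Icc 1 (k₀ l), (G l m - G l (m - 1)) = G l (k₀ l) :=
    fun l => telescope (G l) (hG0 l) (k₀ l)
  rw [Finset.prod_congr rfl fun l _ => htel l]
  obtain ⟨l₀, hl₀⟩ := Function.ne_iff.mp hne
  refine Finset.prod_eq_zero (Finset.mem_univ l₀) ?_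
  rw [hC l₀ (k₀ l₀) (hpos k₀ hk₀K l₀) (hex0 l₀), if_neg (fun hh => hl₀ hh.symm)]
end
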